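/- arXiv:2406.19775 — 3 statements merged into one kernel-verified Lean document; each statement's English description precedes it below -/
import Mathlib

section
/- Under the assumptions 0 < α < β and 0 < γ < δ, the critical point C = (γ(α−β)/D, α(γ−δ)/D) with D = αγ − βδ lies in the open triangle {(x,y) : 0 < x, 0 < y, x + y < 1}. -/
theorem stmt_2 (α β γ δ : ℝ) (hα : 0 < α) (hαβ : α < β) (hγ : 0 < γ) (hγδ : γ < δ) :
    0 < γ * (α - β) / (α * γ - β * δ) ∧
    0 < α * (γ - δ) / (α * γ - β * δ) ∧
    γ * (α - β) / (α * γ - β * δ) + α * (γ - δ) / (α * γ - β * δ) < 1 := by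
  have hD : α * γ - β * δ < 0 := sub_neg.2 (mul_lt_mul'' hαβ hγδ hα.le hγ.le)
  refine ⟨div_pos_of_neg_of_neg (mul_neg_of_pos_of_neg hγ (sub_neg.2 hαβ)) hD,
    div_pos_of_neg_of_neg (mul_neg_of_pos_of_neg hα (sub_neg.2 hγδ)) hD, ?_⟩
  rw [← add_div, div_lt_one_of_neg hD]
  -- `1 - x - y = (β - α)(δ - γ) / (βδ - αγ)`
  linear_combination mul_pos (sub_pos.2 hαβ) (sub_pos.2 hγδ)
end

section
/- Along the line g_y : y = 1 − (δ/γ)x at points strictly above g_x (i.e., with βy > α(1−x)) and with x > 0, any solution of the system satisfies ẏ = 0 and ẋ < 0; hence the velocity vector cannot satisfy δẋ + γẏ > 0, so trajectories cannot cross from sector II into sector I through g_y. -/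
/-! Both components of the vector field factor: `ẏ = y (γ (1 - y) - δ x)` and
`ẋ = x (α (1 - x) - β y)`. On `g_y` the second factor of `ẏ` vanishes, and strictly above `g_x`
the second factor of `ẋ` is negative, so the flux `δ ẋ + γ ẏ = δ ẋ` through `g_y` is negative. -/

theorem competition_rate_eq_zero_of_on_nullcline {γ δ x y : ℝ} (hγ : γ ≠ 0)
    (hgy : y = 1 - δ / γ * x) : γ * y * (1 - y) - δ * x * y = 0 := by
  have hnull : γ * (1 - y) = δ * x := by
    rw [hgy]
    field_simp
    ring
  linear_combination y * hnull

theorem competition_rate_neg_of_above_nullcline {α β x y : ℝ} (hx : 0 < x)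
    (habove : α * (1 - x) < β * y) : α * x * (1 - x) - β * x * y < 0 := by
  have hfactor : α * x * (1 - x) - β * x * y = x * (α * (1 - x) - β * y) := by ring
  rw [hfactor]
  exact mul_neg_of_pos_of_neg hx (sub_neg.mpr habove)

theorem stmt_7_general (α β γ δ x y : ℝ) (hγ : 0 < γ) (hδ : 0 < δ)
    (hgy : y = 1 - (δ / γ) * x) (habove : β * y > α * (1 - x)) (hx : 0 < x) :
    γ * y * (1 - y) - δ * x * y = 0 ∧
    α * x * (1 - x) - β * x * y < 0 ∧
    ¬ (δ * (α * x * (1 - x) - β * x * y) + γ * (γ * y * (1 - y) - δ * x * y) > 0) := by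
  have hydot := competition_rate_eq_zero_of_on_nullcline hγ.ne' hgy
  have hxdot := competition_rate_neg_of_above_nullcline hx habove
  refine ⟨hydot, hxdot, ?_⟩
  rw [hydot, mul_zero, add_zero, not_lt]
  exact (mul_neg_of_pos_of_neg hδ hxdot).le

theorem stmt_7 (α β γ δ x y : ℝ) (hα : 0 < α) (hβ : 0 < β) (hγ : 0 < γ) (hδ : 0 < δ)
    (hαβ : α < β) (hγδ : γ < δ)
    (hgy : y = 1 - (δ / γ) * x) (habove : β * y > α * (1 - x)) (hx : 0 < x) :
    γ * y * (1 - y) - δ * x * y = 0 ∧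
    α * x * (1 - x) - β * x * y < 0 ∧
    ¬ (δ * (α * x * (1 - x) - β * x * y) + γ * (γ * y * (1 - y) - δ * x * y) > 0) :=
  stmt_7_general α β γ δ x y hγ hδ hgy habove hx
end

section
/- The system ẋ = αx(1−x) − βxy, ẏ = γy(1−y) − δxy with α, β, γ, δ > 0, α < β, γ < δ admits no nontrivial periodic orbit contained in the open triangle {0 < x, 0 < y, x + y < 1}. -/
/-!
Write `p = ẋ`, `q = ẏ`. Along a solution, `w = p q` satisfies
`w' = a w - (β x q² + δ y p²)`, where `a` is the divergence of the vector field, so the competitive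
cross terms make `w e^{-∫ a}` nonincreasing. At a maximum of `x` the product `w` vanishes, and by
periodicity it vanishes again one period later; hence `w e^{-∫ a}` is zero on that period, so
`β x q² + δ y p² = 0` there, i.e. `p = q = 0`, and the orbit is a single point.
-/

open Set Function

theorem Function.Periodic.eq_of_eqOn_Ioo {X : Type*} [TopologicalSpace X] [T2Space X]
    {f : ℝ → X} {T a : ℝ} {c : X} (hf : Periodic f T) (hT : 0 < T) (hfc : Continuous f)
    (h : EqOn f (fun _ ↦ c) (Ioo a (a + T))) (t : ℝ) : f t = c := by
  obtain ⟨s, hs, hst⟩ : f t ∈ f '' Icc a (a + T) := hf.image_Icc hT a ▸ mem_range_self t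
  rw [← closure_Ioo (by linarith)] at hs
  exact hst ▸ h.closure hfc continuous_const hs

section LinearDifferentialInequality

variable {a w r : ℝ → ℝ}

theorem hasDerivAt_mul_exp_neg_integral (ha : Continuous a)
    (hw : ∀ t, HasDerivAt w (a t * w t - r t) t) (t : ℝ) :
    HasDerivAt (fun s ↦ w s * Real.exp (-∫ u in (0 : ℝ)..s, a u))
      (-(r t * Real.exp (-∫ u in (0 : ℝ)..t, a u))) t := by
  have hA := (ha.integral_hasStrictDerivAt 0 t).hasDerivAt
  exact ((hw t).mul hA.neg.exp).congr_deriv (by simp only [Pi.neg_apply]; ring)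

theorem eqOn_zero_of_hasDerivAt_mul_sub_of_nonneg (ha : Continuous a)
    (hw : ∀ t, HasDerivAt w (a t * w t - r t) t) (hr : ∀ t, 0 ≤ r t) {t₀ t₁ : ℝ}
    (h₀ : w t₀ = 0) (h₁ : w t₁ = 0) : EqOn r 0 (Ioo t₀ t₁) := by
  set φ := fun s ↦ w s * Real.exp (-∫ u in (0 : ℝ)..s, a u)
  have hφ := hasDerivAt_mul_exp_neg_integral ha hw
  have hanti : Antitone φ := antitone_of_hasDerivAt_nonpos hφ fun t ↦
    neg_nonpos.2 (mul_nonneg (hr t) (Real.exp_pos _).le)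
  have hzero : EqOn φ 0 (Ioo t₀ t₁) := fun s hs ↦ le_antisymm
    (by simpa [φ, h₀] using hanti hs.1.le) (by simpa [φ, h₁] using hanti hs.2.le)
  intro s hs
  have hφ0 : HasDerivAt φ 0 s := (hasDerivAt_const s 0).congr_of_eventuallyEq
    (Filter.eventuallyEq_of_mem (Ioo_mem_nhds hs.1 hs.2) hzero)
  simpa [(Real.exp_pos _).ne'] using (hφ s).unique hφ0

end LinearDifferentialInequality

/-- The system reads `ẋ = competition α β x y`, `ẏ = competition γ δ y x`. -/
def competition (a b u v : ℝ) : ℝ := a * u * (1 - u) - b * u * v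

section Competition

variable {a b c d : ℝ} {u v : ℝ → ℝ}

theorem hasDerivAt_competition {u' v' t : ℝ} (hu : HasDerivAt u u' t) (hv : HasDerivAt v v' t) :
    HasDerivAt (fun s ↦ competition a b (u s) (v s))
      ((a * (1 - 2 * u t) - b * v t) * u' - b * u t * v') t :=
  (((hu.const_mul a).mul ((hasDerivAt_const t 1).sub hu)).sub
    ((hu.const_mul b).mul hv)).congr_deriv (by simp only [Pi.sub_apply]; ring)

theorem hasDerivAt_competition_mul_competition
    (hu : ∀ t, HasDerivAt u (competition a b (u t) (v t)) t)
    (hv : ∀ t, HasDerivAt v (competition c d (v t) (u t)) t) (t : ℝ) :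
    HasDerivAt (fun s ↦ competition a b (u s) (v s) * competition c d (v s) (u s))
      ((a * (1 - 2 * u t) - b * v t + (c * (1 - 2 * v t) - d * u t)) *
          (competition a b (u t) (v t) * competition c d (v t) (u t)) -
        (b * u t * competition c d (v t) (u t) ^ 2 +
          d * v t * competition a b (u t) (v t) ^ 2)) t :=
  ((hasDerivAt_competition (hu t) (hv t)).mul
    (hasDerivAt_competition (hv t) (hu t))).congr_deriv (by unfold competition; ring)

theorem competition_eq_zero_of_periodic
    (hu : ∀ t, HasDerivAt u (competition a b (u t) (v t)) t)
    (hv : ∀ t, HasDerivAt v (competition c d (v t) (u t)) t) (hb : 0 < b) (hd : 0 < d)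
    (hpos : ∀ t, 0 < u t ∧ 0 < v t) {T : ℝ} (hT : 0 < T) (huT : Periodic u T)
    (hvT : Periodic v T) (t : ℝ) :
    competition a b (u t) (v t) = 0 ∧ competition c d (v t) (u t) = 0 := by
  have huc : Continuous u := continuous_iff_continuousAt.2 fun t ↦ (hu t).continuousAt
  have hvc : Continuous v := continuous_iff_continuousAt.2 fun t ↦ (hv t).continuousAt
  set p := fun t ↦ competition a b (u t) (v t)
  set q := fun t ↦ competition c d (v t) (u t)
  obtain ⟨_, ⟨t₀, rfl⟩, hmax⟩ :=
    (huT.compact_of_continuous hT.ne' huc).exists_isGreatest (range_nonempty u)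
  have hp₀ : competition a b (u t₀) (v t₀) = 0 :=
    IsLocalMax.hasDerivAt_eq_zero (.of_forall fun t ↦ hmax ⟨t, rfl⟩) (hu t₀)
  have hterms_nonneg (t : ℝ) : 0 ≤ b * u t * q t ^ 2 ∧ 0 ≤ d * v t * p t ^ 2 := by
    have := (hpos t).1; have := (hpos t).2
    exact ⟨by positivity, by positivity⟩
  set r := fun t ↦ b * u t * q t ^ 2 + d * v t * p t ^ 2
  have hr_period : EqOn r 0 (Ioo t₀ (t₀ + T)) :=
    eqOn_zero_of_hasDerivAt_mul_sub_of_nonneg (by fun_prop [competition])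
      (hasDerivAt_competition_mul_competition hu hv)
      (fun t ↦ add_nonneg (hterms_nonneg t).1 (hterms_nonneg t).2)
      (by simp [hp₀]) (by simp [huT t₀, hvT t₀, hp₀])
  have hr : r t = 0 := Periodic.eq_of_eqOn_Ioo (fun t ↦ by simp only [r, p, q, huT t, hvT t])
    hT (by fun_prop [competition]) hr_period t
  obtain ⟨hq, hp⟩ := (add_eq_zero_iff_of_nonneg (hterms_nonneg t).1 (hterms_nonneg t).2).1 hr
  simpa [hb.ne', hd.ne', (hpos t).1.ne', (hpos t).2.ne'] using And.intro hp hq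

end Competition

theorem stmt_11_general (α β γ δ : ℝ) (hβ : 0 < β) (hδ : 0 < δ) :
    ¬ ∃ (x y : ℝ → ℝ) (T : ℝ), 0 < T ∧
      (∀ t, HasDerivAt x (α * x t * (1 - x t) - β * x t * y t) t) ∧
      (∀ t, HasDerivAt y (γ * y t * (1 - y t) - δ * x t * y t) t) ∧
      (∀ t, x (t + T) = x t ∧ y (t + T) = y t) ∧
      (∀ t, 0 < x t ∧ 0 < y t ∧ x t + y t < 1) ∧
      (∃ t₁ t₂ : ℝ, (x t₁, y t₁) ≠ (x t₂, y t₂)) := by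
  rintro ⟨x, y, T, hT, hx, hy, hper, hpos, t₁, t₂, hne⟩
  have hx' : ∀ t, HasDerivAt x (competition α β (x t) (y t)) t := hx
  have hy' : ∀ t, HasDerivAt y (competition γ δ (y t) (x t)) t := fun t ↦
    (hy t).congr_deriv (by unfold competition; ring)
  have hrest := competition_eq_zero_of_periodic hx' hy' hβ hδ
    (fun t ↦ ⟨(hpos t).1, (hpos t).2.1⟩) hT (fun t ↦ (hper t).1) (fun t ↦ (hper t).2)
  have hconst {f f' : ℝ → ℝ} (hf : ∀ t, HasDerivAt f (f' t) t) (h0 : ∀ t, f' t = 0) :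
      f t₁ = f t₂ :=
    is_const_of_deriv_eq_zero (fun t ↦ (hf t).differentiableAt)
      (fun t ↦ (hf t).deriv.trans (h0 t)) _ _
  exact hne (Prod.ext (hconst hx' fun t ↦ (hrest t).1) (hconst hy' fun t ↦ (hrest t).2))

theorem stmt_11 (α β γ δ : ℝ) (hα : 0 < α) (hβ : 0 < β) (hγ : 0 < γ) (hδ : 0 < δ)
    (hαβ : α < β) (hγδ : γ < δ) :
    ¬ ∃ (x y : ℝ → ℝ) (T : ℝ), 0 < T ∧
      (∀ t, HasDerivAt x (α * x t * (1 - x t) - β * x t * y t) t) ∧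
      (∀ t, HasDerivAt y (γ * y t * (1 - y t) - δ * x t * y t) t) ∧
      (∀ t, x (t + T) = x t ∧ y (t + T) = y t) ∧
      (∀ t, 0 < x t ∧ 0 < y t ∧ x t + y t < 1) ∧
      (∃ t₁ t₂ : ℝ, (x t₁, y t₁) ≠ (x t₂, y t₂)) :=
  stmt_11_general α β γ δ hβ hδ
end
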